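/- Let V be a finite nonempty type, w : V → V → ℕ∞ with w u v ≥ 1 for all u ≠ v, S a decidable subset of V, and Q : ℕ. Define sum_w(v) = ∑_{u : V} dist_w(v,u) and m = ⨅_{v : V} sum_w(v), and assume m < ⊤. Let w' be the median-gadget graph on V ⊕ Unit. Then ⨅_{p : V ⊕ Unit} sum_{w'}(p) = m + Q if S contains a median vertex of w (a vertex v ∈ S with sum_w(v) = m), and ⨅_{p : V ⊕ Unit} sum_{w'}(p) = m + Q + 1 otherwise. -/

import Mathlib

/-- Weight of a walk starting at `u` and visiting the vertices of `p` in order. -/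
def walkWeight {V : Type*} (w : V → V → ℕ∞) : V → List V → ℕ∞
  | _, [] => 0
  | u, x :: xs => w u x + walkWeight w x xs

/-- Shortest-path distance: infimum of weights of walks from `u` to `v`. -/
noncomputable def gdist {V : Type*} (w : V → V → ℕ∞) (u v : V) : ℕ∞ :=
  ⨅ (p : List V) (_ : (u :: p).getLast (List.cons_ne_nil u p) = v), walkWeight w u p

/-- Eccentricity of a vertex. -/
noncomputable def ecc {V : Type*} (w : V → V → ℕ∞) (v : V) : ℕ∞ :=
  ⨆ u, gdist w v u

/-- Radius. -/
noncomputable def rad {V : Type*} (w : V → V → ℕ∞) : ℕ∞ :=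
  ⨅ v, ecc w v

/-- Diameter. -/
noncomputable def diam {V : Type*} (w : V → V → ℕ∞) : ℕ∞ :=
  ⨆ v, ecc w v

/-- Total distance from `v` to all vertices. -/
noncomputable def sumDist {V : Type*} [Fintype V] (w : V → V → ℕ∞) (v : V) : ℕ∞ :=
  ∑ u : V, gdist w v u

/-- Median gadget on `V ⊕ Unit`: a dummy vertex `inr ()` with an incoming edge of weight `Q`
from every vertex of `S`, an incoming edge of weight `Q + 1` from every vertex not in `S`,
and no outgoing edges. -/
def medGadget {V : Type*} (w : V → V → ℕ∞) (S : Set V) [DecidablePred (· ∈ S)] (Q : ℕ) :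
    V ⊕ Unit → V ⊕ Unit → ℕ∞
  | Sum.inl u, Sum.inl v => w u v
  | Sum.inl s, Sum.inr _ => if s ∈ S then (Q : ℕ∞) else ((Q : ℕ∞) + 1)
  | Sum.inr _, _ => ⊤

/-!
In the gadget no walk leaves the dummy vertex `x`, so `sum'(x) = ⊤`, while distances between
old vertices are unchanged. The distance from `v` to `x` is the weight of the direct edge: any
detour first moves to another vertex (cost `≥ 1`) and then pays at least `Q` to enter `x`. So
`sum'(v) = sum(v) + Q` for `v ∈ S` and `sum(v) + Q + 1` otherwise, and minimising over `v` gives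
the claim. All lower bounds on distances are obtained from potentials, i.e. functions that
vanish at the target and drop by at most the edge weight along each edge.
-/

section Walks

variable {V W : Type*} {w : V → V → ℕ∞}

theorem gdist_le_walkWeight {u v : V} (p : List V)
    (hp : (u :: p).getLast (List.cons_ne_nil u p) = v) : gdist w u v ≤ walkWeight w u p :=
  iInf₂_le p hp

theorem le_gdist {u v : V} {c : ℕ∞}
    (h : ∀ p : List V, (u :: p).getLast (List.cons_ne_nil u p) = v → c ≤ walkWeight w u p) :
    c ≤ gdist w u v :=
  le_iInf₂ h

theorem gdist_self (v : V) : gdist w v v = 0 :=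
  nonpos_iff_eq_zero.1 (gdist_le_walkWeight [] rfl)

theorem gdist_le_weight (u v : V) : gdist w u v ≤ w u v := by
  simpa [walkWeight] using gdist_le_walkWeight (w := w) [v] (u := u) rfl

theorem gdist_le_weight_add_gdist (x y u : V) : gdist w x u ≤ w x y + gdist w y u := by
  rw [gdist.eq_1 w y u, ENat.add_iInf₂]
  exact le_iInf₂ fun p hp => gdist_le_walkWeight (y :: p) (by rwa [List.getLast_cons])

theorem le_gdist_of_potential (φ : V → ℕ∞) {t : V} (ht : φ t = 0)
    (hφ : ∀ x y, φ x ≤ w x y + φ y) (u : V) : φ u ≤ gdist w u t := by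
  refine le_gdist fun p hp => ?_
  induction p generalizing u with
  | nil =>
    obtain rfl : u = t := hp
    simp [ht]
  | cons x xs ih =>
    rw [List.getLast_cons (List.cons_ne_nil x xs)] at hp
    exact (hφ u x).trans (add_le_add_right (ih x hp) _)

theorem walkWeight_map_le {w' : W → W → ℕ∞} (f : V → W) (hf : ∀ a b, w' (f a) (f b) ≤ w a b)
    (u : V) (p : List V) : walkWeight w' (f u) (p.map f) ≤ walkWeight w u p := by
  induction p generalizing u with
  | nil => exact le_rfl
  | cons x xs ih => exact add_le_add (hf u x) (ih x)

theorem gdist_map_le {w' : W → W → ℕ∞} (f : V → W) (hf : ∀ a b, w' (f a) (f b) ≤ w a b)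
    (u v : V) : gdist w' (f u) (f v) ≤ gdist w u v := by
  refine le_gdist fun p hp =>
    (gdist_le_walkWeight (p.map f) ?_).trans (walkWeight_map_le f hf u p)
  exact (List.getLast_map (l := u :: p) (List.cons_ne_nil _ _)).trans (congrArg f hp)

end Walks

section MedianGadget

variable {V : Type*} {w : V → V → ℕ∞} {S : Set V} [DecidablePred (· ∈ S)] {Q : ℕ}

theorem gdist_medGadget_inl_inl (v u : V) :
    gdist (medGadget w S Q) (.inl v) (.inl u) = gdist w v u := by
  refine le_antisymm (gdist_map_le Sum.inl (fun _ _ => le_rfl) v u) ?_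
  refine le_gdist_of_potential (Sum.elim (gdist w · u) ⊤) (t := .inl u) (gdist_self u) ?_
    (.inl v)
  rintro (x | -) (y | -)
  · exact gdist_le_weight_add_gdist x y u
  all_goals simp [medGadget]

theorem gdist_medGadget_inr_inl (u : V) :
    gdist (medGadget w S Q) (.inr ()) (.inl u) = ⊤ := by
  refine top_le_iff.1 (le_gdist_of_potential (Sum.elim 0 ⊤) rfl ?_ (.inr ()))
  rintro (x | -) y <;> simp [medGadget]

theorem gdist_medGadget_inl_inr (hpos : ∀ u v : V, u ≠ v → 1 ≤ w u v) (v : V) :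
    gdist (medGadget w S Q) (.inl v) (.inr ()) = if v ∈ S then (Q : ℕ∞) else Q + 1 := by
  refine le_antisymm (gdist_le_weight _ _) ?_
  refine le_gdist_of_potential (Sum.elim (fun x => if x ∈ S then (Q : ℕ∞) else Q + 1) 0) rfl
    ?_ (.inl v)
  have hQ (y : V) : (Q : ℕ∞) ≤ if y ∈ S then (Q : ℕ∞) else Q + 1 := by split_ifs <;> simp
  rintro (x | -) (y | -)
  · obtain rfl | hxy := eq_or_ne x y
    · exact le_add_self
    calc (if x ∈ S then (Q : ℕ∞) else Q + 1) ≤ 1 + Q := by split_ifs <;> simp [add_comm]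
      _ ≤ w x y + _ := add_le_add (hpos x y hxy) (hQ y)
  all_goals simp [medGadget]

variable [Fintype V]

theorem sumDist_medGadget_inl (hpos : ∀ u v : V, u ≠ v → 1 ≤ w u v) (v : V) :
    sumDist (medGadget w S Q) (.inl v) =
      sumDist w v + if v ∈ S then (Q : ℕ∞) else Q + 1 := by
  simp [sumDist, Fintype.sum_sum_type, gdist_medGadget_inl_inl, gdist_medGadget_inl_inr hpos]

theorem sumDist_medGadget_inr [Nonempty V] : sumDist (medGadget w S Q) (.inr ()) = ⊤ := by
  let a : V := Classical.arbitrary V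
  refine top_le_iff.1 ?_
  calc ⊤ = gdist (medGadget w S Q) (.inr ()) (.inl a) := (gdist_medGadget_inr_inl a).symm
    _ ≤ _ := Finset.single_le_sum (fun _ _ => zero_le) (Finset.mem_univ _)

theorem iInf_sumDist_medGadget [Nonempty V] (hpos : ∀ u v : V, u ≠ v → 1 ≤ w u v) :
    ⨅ p, sumDist (medGadget w S Q) p =
      ⨅ v, sumDist w v + if v ∈ S then (Q : ℕ∞) else Q + 1 := by
  simp [iInf_sum, sumDist_medGadget_inr, sumDist_medGadget_inl hpos]

end MedianGadget

namespace ENat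

variable {ι : Type*} (f : ι → ℕ∞) (S : Set ι) [DecidablePred (· ∈ S)] (c : ℕ∞)

theorem iInf_add_ite_of_exists (h : ∃ i ∈ S, f i = ⨅ j, f j) :
    ⨅ i, f i + (if i ∈ S then c else c + 1) = (⨅ i, f i) + c := by
  obtain ⟨i₀, hi₀S, hi₀⟩ := h
  refine le_antisymm (iInf_le_of_le i₀ (by simp [hi₀S, hi₀])) (le_iInf fun i => ?_)
  exact add_le_add (iInf_le f i) (by split_ifs <;> simp)

theorem iInf_add_ite_of_not_exists [Nonempty ι] (hf : ⨅ i, f i < ⊤)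
    (h : ¬ ∃ i ∈ S, f i = ⨅ j, f j) :
    ⨅ i, f i + (if i ∈ S then c else c + 1) = (⨅ i, f i) + c + 1 := by
  obtain ⟨i₀, hi₀⟩ := ciInf_mem f
  have hi₀S : i₀ ∉ S := fun hi₀S => h ⟨i₀, hi₀S, hi₀⟩
  refine le_antisymm (iInf_le_of_le i₀ (by simp [hi₀S, hi₀, add_assoc])) (le_iInf fun i => ?_)
  by_cases hiS : i ∈ S
  · have hlt : ⨅ j, f j < f i := (iInf_le f i).lt_of_ne fun hi => h ⟨i, hiS, hi.symm⟩
    calc (⨅ j, f j) + c + 1 = ((⨅ j, f j) + 1) + c := add_right_comm _ _ _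
      _ ≤ f i + if i ∈ S then c else c + 1 := by
        rw [if_pos hiS]
        exact add_le_add ((ENat.add_one_le_iff hf.ne).2 hlt) le_rfl
  · rw [if_neg hiS, add_assoc]
    exact add_le_add (iInf_le f i) le_rfl

end ENat

theorem stmt19 {V : Type*} [Fintype V] [Nonempty V]
    (w : V → V → ℕ∞) (hpos : ∀ u v : V, u ≠ v → 1 ≤ w u v)
    (S : Set V) [DecidablePred (· ∈ S)] (Q : ℕ)
    (hm : (⨅ v : V, sumDist w v) < ⊤) :
    ((∃ v ∈ S, sumDist w v = ⨅ v : V, sumDist w v) →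
      (⨅ p : V ⊕ Unit, sumDist (medGadget w S Q) p) = (⨅ v : V, sumDist w v) + Q) ∧
    (¬ (∃ v ∈ S, sumDist w v = ⨅ v : V, sumDist w v) →
      (⨅ p : V ⊕ Unit, sumDist (medGadget w S Q) p) = (⨅ v : V, sumDist w v) + Q + 1) := by
  rw [iInf_sumDist_medGadget hpos]
  exact ⟨ENat.iInf_add_ite_of_exists _ S Q, ENat.iInf_add_ite_of_not_exists _ S Q hm⟩
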